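/- Let n be a positive integer and let u, v ∈ ℝⁿ. If C is the n×n matrix with entries C(i,j) = (1 + u_i v_j)^n, then det(C) = Δ(u) · Δ(v) · (∏_{j=0}^{n} C(n, j)) · Σ_{k=0}^{n} e_k(u) e_k(v) / C(n, k), where C(n, j) denotes the binomial coefficient (n choose j). -/

import Mathlib

open Matrix

/-- The Vandermonde polynomial `∏_{i < j} (x_j - x_i)` of a vector. -/
noncomputable def vmd {n : ℕ} (x : Fin n → ℝ) : ℝ :=
  ∏ i : Fin n, ∏ j ∈ Finset.Ioi i, (x j - x i)

/-- The `k`-th elementary symmetric polynomial evaluated at a vector. -/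
noncomputable def esym {n : ℕ} (k : ℕ) (x : Fin n → ℝ) : ℝ :=
  ∑ S ∈ Finset.univ.powersetCard k, ∏ i ∈ S, x i

/-!
By the binomial theorem `C = A * B` with `A i k = (n choose k) * u i ^ k` and `B k j = v j ^ k`
for `0 ≤ k ≤ n`, so the Cauchy–Binet formula expands `det C` over the `n + 1` ways of deleting
one index `m` of the inner dimension. Deleting the power `m` from a Vandermonde matrix multiplies
its determinant by `e_(n-m)`: adjoin the row `1, -X, …, (-X)^n` and compare the coefficient of
`X^m` in the Laplace expansion along it (whose signs the powers of `-X` absorb) with the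
factorisation `Δ(x) * ∏ (X + x_j)`.
-/

open Finset Equiv

section

variable {R : Type*} [CommRing R]

theorem det_mul_eq_sum_det_submatrix_mul_prod {m ι : Type*} [Fintype m] [DecidableEq m]
    [Fintype ι] (A : Matrix m ι R) (B : Matrix ι m R) :
    det (A * B) = ∑ p : m → ι, det (A.submatrix id p) * ∏ i, B (p i) i := by
  simp only [det_apply', mul_apply, prod_univ_sum, mul_sum, Fintype.piFinset_univ, sum_mul,
    submatrix_apply, id, prod_mul_distrib, mul_assoc]
  exact sum_comm

theorem Fin.injective_succAbove_comp_perm {n : ℕ} :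
    Function.Injective fun p : Fin (n + 1) × Perm (Fin n) => p.1.succAbove ∘ p.2 := by
  rintro ⟨m, σ⟩ ⟨m', σ'⟩ h
  have hm : m = m' := by
    have hrange := congrArg Set.range h
    simp only [Set.range_comp, EquivLike.range_eq_univ, Set.image_univ,
      Fin.range_succAbove] at hrange
    simpa using hrange
  subst hm
  exact Prod.ext rfl (Equiv.ext fun j => Fin.succAbove_right_injective (congrFun h j))

theorem Fin.exists_succAbove_comp_perm_of_injective {n : ℕ} {f : Fin n → Fin (n + 1)}
    (hf : Function.Injective f) :
    ∃ (m : Fin (n + 1)) (σ : Perm (Fin n)), m.succAbove ∘ σ = f := by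
  obtain ⟨m, hm⟩ : ∃ m, m ∉ Set.range f := by
    by_contra! h
    simpa using Fintype.card_le_of_surjective f fun m => h m
  choose g hg using fun j => Fin.exists_succAbove_eq (x := f j) fun h => hm ⟨j, h⟩
  have hg_inj : Function.Injective g := fun a b hab => hf (by rw [← hg a, ← hg b, hab])
  exact ⟨m, Equiv.ofBijective g hg_inj.bijective_of_finite, funext hg⟩

theorem det_mul_eq_sum_det_submatrix_succAbove {n : ℕ} (A : Matrix (Fin n) (Fin (n + 1)) R)
    (B : Matrix (Fin (n + 1)) (Fin n) R) :
    det (A * B) =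
      ∑ m : Fin (n + 1), det (A.submatrix id m.succAbove) * det (B.submatrix m.succAbove id) := by
  rw [det_mul_eq_sum_det_submatrix_mul_prod]
  symm
  calc ∑ m : Fin (n + 1), det (A.submatrix id m.succAbove) * det (B.submatrix m.succAbove id)
      = ∑ p : Fin (n + 1) × Perm (Fin n),
          det (A.submatrix id (p.1.succAbove ∘ p.2)) * ∏ i, B (p.1.succAbove (p.2 i)) i := by
        simp only [Fintype.sum_prod_type, det_apply' (B.submatrix _ id), mul_sum, submatrix_apply]
        refine sum_congr rfl fun m _ => sum_congr rfl fun σ _ => ?_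
        rw [show A.submatrix id (m.succAbove ∘ σ) = (A.submatrix id m.succAbove).submatrix id σ
          from rfl, det_permute']
        simp only [id]
        ring
    _ = _ := by
      -- the injective `p` are exactly the `m.succAbove ∘ σ`; the others give repeated columns
      refine sum_of_injOn _ Fin.injective_succAbove_comp_perm.injOn
        (fun _ _ => mem_coe.2 (mem_univ _)) (fun f _ hf => ?_) fun _ _ => rfl
      have hf_not_inj : ¬ Function.Injective f := fun hinj => hf <| by
        obtain ⟨m, σ, rfl⟩ := Fin.exists_succAbove_comp_perm_of_injective hinj
        exact ⟨(m, σ), by simp, rfl⟩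
      simp only [Function.Injective, not_forall] at hf_not_inj
      obtain ⟨i, j, hij, hne⟩ := hf_not_inj
      rw [det_zero_of_column_eq hne (fun k => by simp [hij]), zero_mul]

section

open Polynomial

variable {n : ℕ}

theorem det_vandermonde_cons_neg_X (x : Fin n → R) :
    det (vandermonde (Fin.cons (-X) (C ∘ x) : Fin (n + 1) → R[X])) =
      C (det (vandermonde x)) * ∏ j, (X + C (x j)) := by
  rw [det_vandermonde, det_vandermonde, Fin.prod_univ_succ, Fin.prod_Ioi_zero, mul_comm, map_prod]
  congr 1
  · refine prod_congr rfl fun i _ => ?_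
    rw [Fin.prod_Ioi_succ, map_prod]
    simp
  · simp [add_comm]

theorem det_vandermonde_cons_neg_X_eq_sum (x : Fin n → R) :
    det (vandermonde (Fin.cons (-X) (C ∘ x) : Fin (n + 1) → R[X])) =
      ∑ m : Fin (n + 1), C (det (of fun i j => x i ^ (m.succAbove j : ℕ))) * X ^ (m : ℕ) := by
  rw [det_succ_row_zero]
  refine sum_congr rfl fun m _ => ?_
  have hminor : (vandermonde (Fin.cons (-X) (C ∘ x) : Fin (n + 1) → R[X])).submatrix Fin.succ
      m.succAbove = (of fun i j => x i ^ (m.succAbove j : ℕ)).map C :=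
    Matrix.ext fun i j => by rw [submatrix_apply, vandermonde_apply]; simp
  have hsign : (-1 : R[X]) ^ (m : ℕ) * (-X) ^ (m : ℕ) = X ^ (m : ℕ) := by
    rw [← mul_pow]; simp
  rw [hminor, ← RingHom.mapMatrix_apply, ← RingHom.map_det, vandermonde_apply, Fin.cons_zero]
  linear_combination C (det (of fun i j => x i ^ (m.succAbove j : ℕ))) * hsign

theorem det_of_pow_succAbove (x : Fin n → R) (m : Fin (n + 1)) :
    det (of fun i j => x i ^ (m.succAbove j : ℕ)) =
      (univ.val.map x).esymm (n - m) * det (vandermonde x) := by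
  have h := congrArg (coeff · m)
    ((det_vandermonde_cons_neg_X_eq_sum x).symm.trans (det_vandermonde_cons_neg_X x))
  simp only [finsetSum_coeff, coeff_C_mul, coeff_X_pow, mul_ite, mul_one, mul_zero] at h
  rw [Fintype.sum_eq_single m fun j hj => if_neg fun h => hj (Fin.ext h).symm, if_pos rfl,
    Finset.prod_X_add_C_coeff _ _ (by simpa using m.is_le), card_univ, Fintype.card_fin] at h
  rw [h, Finset.esymm_map_val, mul_comm]

end

theorem one_add_mul_pow_eq_sum {n : ℕ} (a b : R) :
    (1 + a * b) ^ n = ∑ k : Fin (n + 1), (n.choose k * a ^ (k : ℕ)) * b ^ (k : ℕ) := by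
  rw [add_comm, add_pow, ← Fin.sum_univ_eq_sum_range]
  simp only [one_pow, mul_one, mul_pow]
  exact sum_congr rfl fun k _ => by ring

theorem det_one_add_mul_pow {n : ℕ} (u v : Fin n → R) :
    det (of fun i j => (1 + u i * v j) ^ n) =
      ∑ m : Fin (n + 1), (∏ j, (n.choose (m.succAbove j) : R)) *
        ((univ.val.map u).esymm (n - m) * (univ.val.map v).esymm (n - m)) *
          (det (vandermonde u) * det (vandermonde v)) := by
  let A : Matrix (Fin n) (Fin (n + 1)) R := of fun i k => n.choose k * u i ^ (k : ℕ)
  let B : Matrix (Fin (n + 1)) (Fin n) R := of fun k j => v j ^ (k : ℕ)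
  have hAB : (of fun i j => (1 + u i * v j) ^ n) = A * B :=
    Matrix.ext fun i j => one_add_mul_pow_eq_sum (u i) (v j)
  rw [hAB, det_mul_eq_sum_det_submatrix_succAbove]
  refine sum_congr rfl fun m _ => ?_
  have hA : det (A.submatrix id m.succAbove) =
      (∏ j, (n.choose (m.succAbove j) : R)) * det (of fun i j => u i ^ (m.succAbove j : ℕ)) :=
    det_mul_row (fun j => (n.choose (m.succAbove j) : R)) _
  have hB : det (B.submatrix m.succAbove id) = det (of fun i j => v i ^ (m.succAbove j : ℕ)) := by
    rw [← det_transpose]; rfl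
  rw [hA, hB, det_of_pow_succAbove, det_of_pow_succAbove]
  ring

end

theorem prod_choose_succAbove (n : ℕ) (m : Fin (n + 1)) :
    ∏ j, (n.choose (m.succAbove j) : ℝ) =
      (∏ k ∈ range (n + 1), (n.choose k : ℝ)) / n.choose m := by
  rw [eq_div_iff (by exact_mod_cast (Nat.choose_pos m.is_le).ne'), ← Fin.prod_univ_eq_prod_range,
    Fin.prod_univ_succAbove _ m, mul_comm]

theorem vmd_eq_det_vandermonde {n : ℕ} (x : Fin n → ℝ) : vmd x = det (vandermonde x) :=
  (det_vandermonde x).symm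

theorem esym_eq_esymm {n : ℕ} (k : ℕ) (x : Fin n → ℝ) :
    esym k x = (univ.val.map x).esymm k :=
  (esymm_map_val x univ k).symm

theorem stmt_3_general (n : ℕ) (u v : Fin n → ℝ)
    (C : Matrix (Fin n) (Fin n) ℝ)
    (hC : ∀ i j, C i j = (1 + u i * v j) ^ n) :
    C.det = vmd u * vmd v * (∏ j ∈ Finset.range (n + 1), (n.choose j : ℝ)) *
      ∑ k ∈ Finset.range (n + 1), esym k u * esym k v / (n.choose k : ℝ) := by
  rw [show C = of fun i j => (1 + u i * v j) ^ n from Matrix.ext hC, det_one_add_mul_pow]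
  simp only [prod_choose_succAbove, vmd_eq_det_vandermonde, esym_eq_esymm]
  rw [← Fin.sum_univ_eq_sum_range, mul_sum]
  refine Fintype.sum_equiv Fin.revPerm _ _ fun m => ?_
  rw [Fin.revPerm_apply, Fin.val_rev, show n + 1 - (m + 1) = n - m by omega,
    Nat.choose_symm m.is_le]
  ring

theorem stmt_3 (n : ℕ) (hn : 0 < n) (u v : Fin n → ℝ)
    (C : Matrix (Fin n) (Fin n) ℝ)
    (hC : ∀ i j, C i j = (1 + u i * v j) ^ n) :
    C.det = vmd u * vmd v * (∏ j ∈ Finset.range (n + 1), (n.choose j : ℝ)) *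
      ∑ k ∈ Finset.range (n + 1), esym k u * esym k v / (n.choose k : ℝ) :=
  stmt_3_general n u v C hC
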